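/- Let (R, α) be a multiplicative Hom-Lie conformal algebra and set R̆ = R t + R t² (with t³ = 0), with bracket [(a t^i)_λ (b t^j)] = [a_λ b] t^{i+j} (zero if i+j ≥ 3), ᾰ(a t^i) = α(a) t^i, and ∂(a t^i) = (∂a) t^i. Then (R̆, ᾰ) is a multiplicative Hom-Lie conformal algebra. -/

import Mathlib

open Polynomial

/-- A Hom-Lie conformal algebra.  The carrier `R` is a `ℂ[∂]`-module (here the
action of `∂` is the action of `Polynomial.X`), `alpha` is a `ℂ[∂]`-linear map
(so it is `ℂ`-linear and commutes with `∂`), and the λ-bracket is modelled as a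
family of `ℂ`-bilinear maps indexed by `λ ∈ ℂ[∂]` (so that substitutions such as
`λ ↦ -∂-λ` make sense). -/
structure HLCA (R : Type*) [AddCommGroup R] [Module (Polynomial ℂ) R] where
  alpha : R →ₗ[Polynomial ℂ] R
  br : Polynomial ℂ → R → R → R
  br_add_left : ∀ l a a' b, br l (a + a') b = br l a b + br l a' b
  br_add_right : ∀ l a b b', br l a (b + b') = br l a b + br l a b'
  br_smul_left : ∀ l (c : ℂ) a b, br l ((C c) • a) b = (C c) • br l a b
  br_smul_right : ∀ l (c : ℂ) a b, br l a ((C c) • b) = (C c) • br l a b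
  sesq_left : ∀ l a b, br l ((X : Polynomial ℂ) • a) b = (-l) • br l a b
  sesq_right : ∀ l a b,
    br l a ((X : Polynomial ℂ) • b) = ((X : Polynomial ℂ) + l) • br l a b
  skew : ∀ l a b, br l a b = - br (-(X : Polynomial ℂ) - l) b a
  jacobi : ∀ l m a b c,
    br l (alpha a) (br m b c)
      = br (l + m) (br l a b) (alpha c) + br m (alpha b) (br l a c)

/-- A Hom-Lie conformal algebra is multiplicative if `α` is a homomorphism for
the λ-bracket. -/
def HLCA.Multiplicative {R : Type*} [AddCommGroup R] [Module (Polynomial ℂ) R]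
    (L : HLCA R) : Prop :=
  ∀ l a b, L.alpha (L.br l a b) = L.br l (L.alpha a) (L.alpha b)

namespace HLCA

variable {R : Type*} [AddCommGroup R] [Module (Polynomial ℂ) R]

lemma br_zero_left (L : HLCA R) (l : Polynomial ℂ) (b : R) : L.br l 0 b = 0 := by
  simpa using (L.br_add_left l 0 0 b).symm

lemma br_zero_right (L : HLCA R) (l : Polynomial ℂ) (a : R) : L.br l a 0 = 0 := by
  simpa using (L.br_add_right l a 0 0).symm

/-- `R̆ = R ⊗ tℂ[t]/(t³)`, encoded as `R × R` with `(a, b) ↔ a t + b t²`. Since `t³ = 0`, only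
`t · t = t²` contributes to the bracket. The Hom-Jacobi identity holds because every double
bracket has a `t²`-factor inside a bracket with a multiple of `t`, hence vanishes. -/
noncomputable def truncatedTensor (L : HLCA R) : HLCA (R × R) where
  alpha := L.alpha.prodMap L.alpha
  br l x y := (0, L.br l x.1 y.1)
  br_add_left l a a' b := by ext <;> simp [L.br_add_left]
  br_add_right l a b b' := by ext <;> simp [L.br_add_right]
  br_smul_left l c a b := by ext <;> simp [L.br_smul_left]
  br_smul_right l c a b := by ext <;> simp [L.br_smul_right]
  sesq_left l a b := by ext <;> simp [L.sesq_left]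
  sesq_right l a b := by ext <;> simp [L.sesq_right]
  skew l a b := by ext <;> simp [← L.skew]
  jacobi l m a b c := by ext <;> simp [L.br_zero_left, L.br_zero_right]

lemma Multiplicative.truncatedTensor {L : HLCA R} (hL : L.Multiplicative) :
    L.truncatedTensor.Multiplicative := fun l a b =>
  Prod.ext (by simp [HLCA.truncatedTensor]) (hL l a.1 b.1)

end HLCA

/-- For a multiplicative Hom-Lie conformal algebra `(R, α)`,
`R̆ = Rt + Rt²` (with `t³ = 0`), modelled as `R × R` (first component the
coefficient of `t`, second of `t²`), with bracket
`[(at^i)_λ (bt^j)] = [a_λ b] t^{i+j}` (zero if `i + j ≥ 3`),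
`ᾰ(a t^i) = α(a) t^i` and `∂(a t^i) = (∂a) t^i`, is a multiplicative Hom-Lie
conformal algebra. -/
theorem stmt18 {R : Type*} [AddCommGroup R] [Module (Polynomial ℂ) R]
    (L : HLCA R) (hL : L.Multiplicative) :
    ∃ S : HLCA (R × R),
      S.alpha = L.alpha.prodMap L.alpha ∧
      (∀ l (x y : R × R), S.br l x y = ((0 : R), L.br l x.1 y.1)) ∧
      S.Multiplicative :=
  ⟨L.truncatedTensor, rfl, fun _ _ _ => rfl, hL.truncatedTensor⟩
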